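/- Let $t_n \le \tau < t_{n+1}$ and let $\check P(\tau) = V(\tau) F^T$ where $V(\tau)$ is the block row vector with entries $V(\tau)_r = \Phi(\tau,t_n)\Phi(t_n,t_r) Q_r$ for $r \le n$, $V(\tau)_{n+1} = Q_\tau \Phi(t_{n+1},\tau)^T$, and $V(\tau)_r = 0$ for $r > n+1$. Then $\check P(\tau)\check P^{-1} = V(\tau) Q^{-1} F^{-1}$ has exactly two (potentially) nonzero block entries, in columns $n$ and $n+1$: $\Lambda(\tau) = \Phi(\tau,t_n) - \Psi(\tau)\Phi(t_{n+1},t_n)$ in column $n$ and $\Psi(\tau) = Q_\tau \Phi(t_{n+1},\tau)^T Q_{n+1}^{-1}$ in column $n+1$. -/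

import Mathlib

/-!
`F` is lower block-triangular with entries `Φ(tᵢ, tⱼ)`, and the cocycle identity makes
`F⁻¹ = 1 - S` with `S` carrying `Φ(tᵢ₊₁, tᵢ)` on the first block subdiagonal: `S F = F S = F - 1`.
Hence the blockwise transposes of `F` and `F⁻¹` cancel. Moreover `V Q⁻¹` is
`Φ(τ, tₙ)` times row `n` of `F`, plus `Ψ` in block `n + 1`, so `V Q⁻¹ F⁻¹` is `Φ(τ, tₙ) eₙ`
plus `Ψ` times row `n + 1` of `F⁻¹`, which is `-Φ(tₙ₊₁, tₙ)` in block `n` and `1` in block `n + 1`.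
-/

open Matrix

def blockT {N d : ℕ}
    (A : Matrix (Fin N) (Fin N) (Matrix (Fin d) (Fin d) ℝ)) :
    Matrix (Fin N) (Fin N) (Matrix (Fin d) (Fin d) ℝ) :=
  Matrix.of fun i j => (A j i)ᵀ

lemma Fin.sum_ite_val_eq {M : Type*} [AddCommMonoid M] {n : ℕ} (m : ℕ) (f : Fin n → M) :
    ∑ k : Fin n, (if (k : ℕ) = m then f k else 0) = if h : m < n then f ⟨m, h⟩ else 0 := by
  split_ifs with h
  · rw [Finset.sum_eq_single_of_mem ⟨m, h⟩ (Finset.mem_univ _)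
      fun k _ hk => if_neg fun e => hk (Fin.ext e), if_pos rfl]
  · exact Finset.sum_eq_zero fun k _ => if_neg (by omega)

namespace Matrix

variable {R : Type*} [Ring R] {n : ℕ} (G : Fin n → Fin n → R)

def transitionMatrix : Matrix (Fin n) (Fin n) R :=
  of fun i j => if (j : ℕ) ≤ i then G i j else 0

def subdiagonal : Matrix (Fin n) (Fin n) R :=
  of fun i j => if (i : ℕ) = j + 1 then G i j else 0

variable {G}

lemma transitionMatrix_apply_of_le {i j : Fin n} (h : j ≤ i) : transitionMatrix G i j = G i j :=
  if_pos h

lemma transitionMatrix_apply_of_lt {i j : Fin n} (h : i < j) : transitionMatrix G i j = 0 :=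
  if_neg (not_le.2 h)

lemma subdiagonal_mul_apply (A : Matrix (Fin n) (Fin n) R) (i j : Fin n) :
    (subdiagonal G * A) i j =
      if h : 0 < (i : ℕ) then G i ⟨i - 1, by omega⟩ * A ⟨i - 1, by omega⟩ j else 0 := by
  obtain ⟨_ | m, hi⟩ := i
  · simp [mul_apply, subdiagonal]
  · simp [mul_apply, subdiagonal, @eq_comm ℕ m, Fin.sum_ite_val_eq, show m < n by omega]

lemma mul_subdiagonal_apply (A : Matrix (Fin n) (Fin n) R) (i j : Fin n) :
    (A * subdiagonal G) i j =
      if h : (j : ℕ) + 1 < n then A i ⟨j + 1, h⟩ * G ⟨j + 1, h⟩ j else 0 := by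
  simp only [mul_apply, subdiagonal, of_apply, mul_ite, mul_zero, Fin.sum_ite_val_eq]

lemma one_sub_subdiagonal_apply (i j : Fin n) :
    (1 - subdiagonal G) i j = if (i : ℕ) = j + 1 then -G i j else if j = i then 1 else 0 := by
  by_cases h : (i : ℕ) = j + 1
  · have : i ≠ j := fun e => by rw [e] at h; omega
    simp [subdiagonal, h, one_apply_ne this]
  · by_cases e : j = i
    · simp [subdiagonal, e]
    · simp [subdiagonal, h, e, one_apply_ne (Ne.symm e)]

variable (hG_one : ∀ i, G i i = 1) (hG_mul : ∀ i j k, G i j * G j k = G i k)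
include hG_one hG_mul

lemma subdiagonal_mul_transitionMatrix :
    subdiagonal G * transitionMatrix G = transitionMatrix G - 1 := by
  ext i j
  rw [subdiagonal_mul_apply, sub_apply]
  rcases lt_trichotomy j i with h | rfl | h
  · rw [dif_pos (by omega), transitionMatrix_apply_of_le (by simp [Fin.le_def]; omega), hG_mul,
      transitionMatrix_apply_of_le h.le, one_apply_ne h.ne', sub_zero]
  · rw [transitionMatrix_apply_of_le le_rfl, hG_one, one_apply_eq, sub_self]
    exact dite_eq_right_iff.2 fun _ => by
      rw [transitionMatrix_apply_of_lt (by simp [Fin.lt_def]; omega), mul_zero]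
  · rw [transitionMatrix_apply_of_lt h, one_apply_ne h.ne, sub_zero]
    exact dite_eq_right_iff.2 fun _ => by
      rw [transitionMatrix_apply_of_lt (by simp [Fin.lt_def]; omega), mul_zero]

lemma transitionMatrix_mul_subdiagonal :
    transitionMatrix G * subdiagonal G = transitionMatrix G - 1 := by
  ext i j
  rw [mul_subdiagonal_apply, sub_apply]
  rcases lt_trichotomy j i with h | rfl | h
  · rw [dif_pos (by omega), transitionMatrix_apply_of_le (by simp [Fin.le_def]; omega), hG_mul,
      transitionMatrix_apply_of_le h.le, one_apply_ne h.ne', sub_zero]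
  · rw [transitionMatrix_apply_of_le le_rfl, hG_one, one_apply_eq, sub_self]
    exact dite_eq_right_iff.2 fun _ => by
      rw [transitionMatrix_apply_of_lt (by simp [Fin.lt_def]), zero_mul]
  · rw [transitionMatrix_apply_of_lt h, one_apply_ne h.ne, sub_zero]
    exact dite_eq_right_iff.2 fun _ => by
      rw [transitionMatrix_apply_of_lt (by simp [Fin.lt_def]; omega), zero_mul]

lemma one_sub_subdiagonal_mul_transitionMatrix :
    (1 - subdiagonal G) * transitionMatrix G = 1 := by
  rw [sub_mul, subdiagonal_mul_transitionMatrix hG_one hG_mul, one_mul, sub_sub_cancel]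

lemma transitionMatrix_mul_one_sub_subdiagonal :
    transitionMatrix G * (1 - subdiagonal G) = 1 := by
  rw [mul_sub, transitionMatrix_mul_subdiagonal hG_one hG_mul, mul_one, sub_sub_cancel]

end Matrix

lemma blockT_mul {N d : ℕ} (A B : Matrix (Fin N) (Fin N) (Matrix (Fin d) (Fin d) ℝ)) :
    blockT A * blockT B = blockT (B * A) := by
  ext i j
  simp [blockT, Matrix.mul_apply, Matrix.transpose_sum]

lemma blockT_one {N d : ℕ} :
    blockT (1 : Matrix (Fin N) (Fin N) (Matrix (Fin d) (Fin d) ℝ)) = 1 := by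
  ext i j
  by_cases h : i = j <;> simp [blockT, Matrix.one_apply, h, eq_comm]

theorem interpolation_product_sparsity_general
    {d N : ℕ} (t : Fin (N + 1) → ℝ)
    (τ : ℝ) (n np1 : Fin (N + 1)) (hnp1 : (np1 : ℕ) = (n : ℕ) + 1)
    (Φ : ℝ → ℝ → Matrix (Fin d) (Fin d) ℝ)
    (hΦ_id : ∀ s : ℝ, Φ s s = 1)
    (hΦ_comp : ∀ a b c : ℝ, Φ a b * Φ b c = Φ a c)
    (Q Qinv : Fin (N + 1) → Matrix (Fin d) (Fin d) ℝ)
    (hQ : ∀ m, Q m * Qinv m = 1 ∧ Qinv m * Q m = 1)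
    (Qτ : Matrix (Fin d) (Fin d) ℝ)
    (F Finv : Matrix (Fin (N + 1)) (Fin (N + 1)) (Matrix (Fin d) (Fin d) ℝ))
    (hF : ∀ i j : Fin (N + 1),
      F i j = if (j : ℕ) ≤ (i : ℕ) then Φ (t i) (t j) else 0)
    (hFinv : ∀ i j : Fin (N + 1),
      Finv i j = if (i : ℕ) = (j : ℕ) + 1 then -Φ (t i) (t j)
                 else if j = i then 1 else 0)
    (V : Matrix (Fin 1) (Fin (N + 1)) (Matrix (Fin d) (Fin d) ℝ))
    (hV : ∀ r : Fin (N + 1),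
      V 0 r = if (r : ℕ) ≤ (n : ℕ) then Φ τ (t n) * Φ (t n) (t r) * Q r
              else if r = np1 then Qτ * (Φ (t np1) τ)ᵀ else 0)
    (Λ Ψ : Matrix (Fin d) (Fin d) ℝ)
    (hΨ : Ψ = Qτ * (Φ (t np1) τ)ᵀ * Qinv np1)
    (hΛ : Λ = Φ τ (t n) - Ψ * Φ (t np1) (t n)) :
    (V * blockT F) * (blockT Finv * Matrix.diagonal Qinv * Finv) =
        V * Matrix.diagonal Qinv * Finv ∧
      ∀ j : Fin (N + 1),
        (V * Matrix.diagonal Qinv * Finv) 0 j =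
          if j = n then Λ else if j = np1 then Ψ else 0 := by
  set G : Fin (N + 1) → Fin (N + 1) → Matrix (Fin d) (Fin d) ℝ := fun i j => Φ (t i) (t j)
  have hG_one : ∀ i, G i i = 1 := fun i => hΦ_id _
  have hG_mul : ∀ i j k, G i j * G j k = G i k := fun i j k => hΦ_comp _ _ _
  have hF' : F = transitionMatrix G := Matrix.ext hF
  have hFinv' : Finv = 1 - subdiagonal G :=
    Matrix.ext fun i j => (hFinv i j).trans (one_sub_subdiagonal_apply (G := G) i j).symm
  have hFinvF : Finv * F = 1 :=
    hF' ▸ hFinv' ▸ one_sub_subdiagonal_mul_transitionMatrix hG_one hG_mul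
  have hFFinv : F * Finv = 1 :=
    hF' ▸ hFinv' ▸ transitionMatrix_mul_one_sub_subdiagonal hG_one hG_mul
  have hVQ : V * diagonal Qinv = single 0 n (Φ τ (t n)) * F + single 0 np1 Ψ := by
    refine Matrix.ext fun a r => ?_
    obtain rfl : a = 0 := Subsingleton.elim _ _
    rw [mul_diagonal, Matrix.add_apply, single_mul_apply_same, hV, hF, single_apply, hΨ]
    rcases eq_or_ne r np1 with rfl | hr
    · simp [hnp1]
    · by_cases hrn : (r : ℕ) ≤ n
      · simp [hrn, hr.symm, Matrix.mul_assoc, (hQ r).1]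
      · simp [hrn, hr, hr.symm]
  refine ⟨?_, fun j => ?_⟩
  · rw [Matrix.mul_assoc, ← Matrix.mul_assoc (blockT F), ← Matrix.mul_assoc (blockT F),
      blockT_mul, hFinvF, blockT_one, Matrix.one_mul, Matrix.mul_assoc]
  · rw [hVQ, Matrix.add_mul, Matrix.mul_assoc, hFFinv, Matrix.mul_one, Matrix.add_apply,
      single_mul_apply_same, hFinv, hΛ, single_apply]
    rcases eq_or_ne j n with rfl | hjn
    · simp [hnp1, sub_eq_add_neg]
    · have hsub : (np1 : ℕ) ≠ j + 1 := fun h => hjn (Fin.ext (by omega))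
      simp [hjn, hjn.symm, hsub]

/-- the interpolation product `P̌(τ) P̌⁻¹ = V(τ) Q⁻¹ F⁻¹` has
exactly two (potentially) nonzero block entries, `Λ(τ)` in block column `n`
and `Ψ(τ)` in block column `n+1`. -/
theorem interpolation_product_sparsity
    {d N : ℕ} (t : Fin (N + 1) → ℝ) (ht : StrictMono t)
    (τ : ℝ) (n np1 : Fin (N + 1)) (hnp1 : (np1 : ℕ) = (n : ℕ) + 1)
    (hτ : t n ≤ τ ∧ τ < t np1)
    (Φ : ℝ → ℝ → Matrix (Fin d) (Fin d) ℝ)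
    (hΦ_id : ∀ s : ℝ, Φ s s = 1)
    (hΦ_comp : ∀ a b c : ℝ, Φ a b * Φ b c = Φ a c)
    (Q Qinv : Fin (N + 1) → Matrix (Fin d) (Fin d) ℝ)
    (hQ : ∀ m, Q m * Qinv m = 1 ∧ Qinv m * Q m = 1)
    (Qτ : Matrix (Fin d) (Fin d) ℝ)
    (F Finv : Matrix (Fin (N + 1)) (Fin (N + 1)) (Matrix (Fin d) (Fin d) ℝ))
    (hF : ∀ i j : Fin (N + 1),
      F i j = if (j : ℕ) ≤ (i : ℕ) then Φ (t i) (t j) else 0)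
    (hFinv : ∀ i j : Fin (N + 1),
      Finv i j = if (i : ℕ) = (j : ℕ) + 1 then -Φ (t i) (t j)
                 else if j = i then 1 else 0)
    (V : Matrix (Fin 1) (Fin (N + 1)) (Matrix (Fin d) (Fin d) ℝ))
    (hV : ∀ r : Fin (N + 1),
      V 0 r = if (r : ℕ) ≤ (n : ℕ) then Φ τ (t n) * Φ (t n) (t r) * Q r
              else if r = np1 then Qτ * (Φ (t np1) τ)ᵀ else 0)
    (Λ Ψ : Matrix (Fin d) (Fin d) ℝ)
    (hΨ : Ψ = Qτ * (Φ (t np1) τ)ᵀ * Qinv np1)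
    (hΛ : Λ = Φ τ (t n) - Ψ * Φ (t np1) (t n)) :
    (V * blockT F) * (blockT Finv * Matrix.diagonal Qinv * Finv) =
        V * Matrix.diagonal Qinv * Finv ∧
      ∀ j : Fin (N + 1),
        (V * Matrix.diagonal Qinv * Finv) 0 j =
          if j = n then Λ else if j = np1 then Ψ else 0 :=
  interpolation_product_sparsity_general t τ n np1 hnp1 Φ hΦ_id hΦ_comp Q Qinv hQ Qτ F Finv hF hFinv
    V hV Λ Ψ hΨ hΛ
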